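/- For the exact primal error $\phi = u - u^h$ and exact dual error $\psi = w - w^h$ in a symmetric coercive bilinear form $a$, the goal error satisfies the exact identity $S(u - u^h) = \tfrac14 \|\phi + \psi\|_E^2 - \tfrac14 \|\phi - \psi\|_E^2$, where $\|v\|_E^2 = a(v,v)$, $w$ solves the dual problem $a(v,w) = S(v)$ for all $v$, and $w^h \in V^h$ is arbitrary. -/
import Mathlib

/-- Exact goal-error identity via polarization: with primal error `φ = u - uh`
and dual error `ψ = w - wh`, `S (u - uh) = ¼‖φ+ψ‖²_E − ¼‖φ−ψ‖²_E`. -/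
theorem stmt_10
    {V : Type*} [NormedAddCommGroup V] [InnerProductSpace ℝ V] [CompleteSpace V]
    (Vh : Subspace ℝ V)
    (a : V →ₗ[ℝ] V →ₗ[ℝ] ℝ) (hsym : ∀ u v : V, a u v = a v u)
    (α : ℝ) (hα : 0 < α) (hcoer : ∀ v : V, α * ‖v‖ ^ 2 ≤ a v v)
    (L S : V →L[ℝ] ℝ)
    (u : V) (hu : ∀ v : V, a u v = L v)
    (uh : V) (huh : uh ∈ Vh) (huhsol : ∀ vh ∈ Vh, a uh vh = L vh)
    (w : V) (hw : ∀ v : V, a v w = S v)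
    (wh : V) (hwh : wh ∈ Vh) :
    S (u - uh) =
      (1 / 4) * a ((u - uh) + (w - wh)) ((u - uh) + (w - wh)) -
        (1 / 4) * a ((u - uh) - (w - wh)) ((u - uh) - (w - wh)) := by
  set φ := u - uh
  set ψ := w - wh
  have horth : a φ wh = 0 := by
    have h1 := hu wh
    have h2 := huhsol wh hwh
    simp only [φ, map_sub, LinearMap.sub_apply, h1, h2, sub_self]
  have hφψ : a φ ψ = S φ := by
    have h1 : a φ w = S φ := hw φ
    simp only [ψ, map_sub, h1, horth, sub_zero]
  have hexp : a (φ + ψ) (φ + ψ) - a (φ - ψ) (φ - ψ) = 4 * a φ ψ := by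
    simp only [map_add, map_sub, LinearMap.add_apply, LinearMap.sub_apply]
    rw [hsym ψ φ]
    ring
  have : (1 / 4) * a (φ + ψ) (φ + ψ) - (1 / 4) * a (φ - ψ) (φ - ψ) = a φ ψ := by
    rw [show (1:ℝ)/4 * a (φ + ψ) (φ + ψ) - 1/4 * a (φ - ψ) (φ - ψ)
        = (a (φ + ψ) (φ + ψ) - a (φ - ψ) (φ - ψ)) / 4 by ring, hexp]
    ring
  rw [this, hφψ]
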